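/- Let $X$ be a Banach space, $\alpha > 0$, $K \geq 1$, $0 \leq \delta < \frac{1-e^{-\alpha}}{1+e^{-\alpha}}$, let $G : \mathbb{Z} \times \mathbb{Z} \to \mathcal{L}(X)$ satisfy $\|G(n,k)\| \leq K e^{-\alpha|n-k|}$, let $B : \mathbb{Z} \to \mathcal{L}(X)$ with $\|B(k)\| \leq \delta K^{-1}$ for all $k$, and let $f \in \ell^\infty(\mathbb{Z}, X)$. If $x \in \ell^\infty(\mathbb{Z}, X)$ satisfies $x_n = \sum_{k=-\infty}^{+\infty} G(n,k+1)(B(k)x_k + f_k)$ for all $n$, then $\|x\|_{\ell^\infty} \leq \frac{1+e^{-\alpha}}{1-e^{-\alpha}} \cdot \frac{K \|f\|_{\ell^\infty}}{1 - \rho}$, where $\rho := \delta \frac{1+e^{-\alpha}}{1-e^{-\alpha}}$. -/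

import Mathlib

/-!
With `r = e^{-α}` and `S = (1 + r) / (1 - r)`, the `k`-th term of the series for `x n` is bounded
by `r^{|n-k-1|} (δ ‖x‖∞ + K ‖f‖∞)`, and the two-sided geometric series `∑_{k ∈ ℤ} r^{|k|}`
sums to `S`. Hence `‖x‖∞ ≤ S (δ ‖x‖∞ + K ‖f‖∞)`, and since `δ S < 1` the term `δ S ‖x‖∞` can be
absorbed into the left-hand side.
-/

lemma hasSum_pow_natAbs {r : ℝ} (h0 : 0 ≤ r) (h1 : r < 1) :
    HasSum (fun j : ℤ => r ^ j.natAbs) ((1 + r) / (1 - r)) := by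
  have hnonneg : HasSum (fun n : ℕ => r ^ (n : ℤ).natAbs) (1 - r)⁻¹ := by
    simpa only [Int.natAbs_natCast] using hasSum_geometric_of_lt_one h0 h1
  have hneg : HasSum (fun n : ℕ => r ^ (-(n + 1 : ℤ)).natAbs) (r * (1 - r)⁻¹) := by
    have hnatAbs (n : ℕ) : (-(n + 1 : ℤ)).natAbs = n + 1 := by omega
    simpa only [hnatAbs, pow_succ'] using (hasSum_geometric_of_lt_one h0 h1).mul_left r
  convert HasSum.of_nat_of_neg_add_one (f := fun j : ℤ => r ^ j.natAbs) hnonneg hneg using 1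
  ring

lemma hasSum_pow_natAbs_sub {r : ℝ} (h0 : 0 ≤ r) (h1 : r < 1) (a : ℤ) :
    HasSum (fun k : ℤ => r ^ (a - k).natAbs) ((1 + r) / (1 - r)) :=
  ((Equiv.subLeft a).hasSum_iff (f := fun j : ℤ => r ^ j.natAbs)).mpr
    (hasSum_pow_natAbs h0 h1)

lemma exp_neg_mul_abs_eq_pow (α : ℝ) (m : ℤ) :
    Real.exp (-α * ((|m| : ℤ) : ℝ)) = Real.exp (-α) ^ m.natAbs := by
  rw [← Real.exp_nat_mul, Nat.cast_natAbs, mul_comm]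

lemma norm_apply_add_le {𝕜 E F : Type*} [NontriviallyNormedField 𝕜]
    [SeminormedAddCommGroup E] [NormedSpace 𝕜 E] [SeminormedAddCommGroup F] [NormedSpace 𝕜 F]
    (g : F →L[𝕜] E) (b : E →L[𝕜] F) {y : E} {z : F} {K δ ρ M N : ℝ} (hK : K ≠ 0)
    (hg : ‖g‖ ≤ K * ρ) (hb : ‖b‖ ≤ δ * K⁻¹) (hy : ‖y‖ ≤ M) (hz : ‖z‖ ≤ N) :
    ‖g (b y + z)‖ ≤ ρ * (δ * M + K * N) := by
  have hby : ‖b y‖ ≤ δ * K⁻¹ * M :=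
    (b.le_opNorm y).trans (mul_le_mul hb hy (norm_nonneg _) ((norm_nonneg _).trans hb))
  calc ‖g (b y + z)‖ ≤ ‖g‖ * ‖b y + z‖ := g.le_opNorm _
    _ ≤ K * ρ * (δ * K⁻¹ * M + N) :=
      mul_le_mul hg ((norm_add_le _ _).trans (add_le_add hby hz)) (norm_nonneg _)
        ((norm_nonneg _).trans hg)
    _ = ρ * (δ * M + K * N) := by field_simp

lemma le_mul_div_of_le_mul_add {M S δ a : ℝ} (hδS : δ * S < 1) (h : M ≤ S * (δ * M + a)) :
    M ≤ S * (a / (1 - δ * S)) := by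
  rw [mul_div_assoc', le_div_iff₀ (by linarith)]
  linarith

lemma norm_le_iSup_norm {ι E : Type*} [Norm E] {x : ι → E} (hx : ∃ C, ∀ n, ‖x n‖ ≤ C) (n : ι) :
    ‖x n‖ ≤ ⨆ m, ‖x m‖ :=
  let ⟨C, hC⟩ := hx
  le_ciSup ⟨C, Set.forall_mem_range.mpr hC⟩ n

theorem stmt_3_general {X : Type*} [NormedAddCommGroup X] [NormedSpace ℝ X]
    (α K δ : ℝ) (hα : 0 < α) (hK : 1 ≤ K)
    (hδ : δ < (1 - Real.exp (-α)) / (1 + Real.exp (-α)))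
    (G : ℤ → ℤ → X →L[ℝ] X)
    (hG : ∀ n k : ℤ, ‖G n k‖ ≤ K * Real.exp (-α * ((|n - k| : ℤ) : ℝ)))
    (B : ℤ → X →L[ℝ] X) (hB : ∀ k, ‖B k‖ ≤ δ * K⁻¹)
    (f : ℤ → X) (hf : ∃ C, ∀ n, ‖f n‖ ≤ C)
    (x : ℤ → X) (hx : ∃ C, ∀ n, ‖x n‖ ≤ C)
    (hfix : ∀ n : ℤ, x n = ∑' k : ℤ, G n (k + 1) (B k (x k) + f k)) :
    ∀ n : ℤ, ‖x n‖ ≤ (1 + Real.exp (-α)) / (1 - Real.exp (-α)) *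
      (K * (⨆ m : ℤ, ‖f m‖) / (1 - δ * (1 + Real.exp (-α)) / (1 - Real.exp (-α)))) := by
  set r := Real.exp (-α)
  have hr1 : r < 1 := Real.exp_lt_one_iff.mpr (by linarith)
  have hδS : δ * ((1 + r) / (1 - r)) < 1 := by
    rw [lt_div_iff₀ (by positivity)] at hδ
    rw [mul_div_assoc', div_lt_one (by linarith)]
    linarith
  have hterm (n k : ℤ) : ‖G n (k + 1) (B k (x k) + f k)‖ ≤
      r ^ (n - 1 - k).natAbs * (δ * (⨆ m, ‖x m‖) + K * ⨆ m, ‖f m‖) := by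
    refine norm_apply_add_le _ _ (zero_lt_one.trans_le hK).ne' ?_ (hB k) (norm_le_iSup_norm hx k)
      (norm_le_iSup_norm hf k)
    rw [← exp_neg_mul_abs_eq_pow, show n - 1 - k = n - (k + 1) by ring]
    exact hG n (k + 1)
  have hsup : (⨆ m, ‖x m‖) ≤ (1 + r) / (1 - r) * (δ * (⨆ m, ‖x m‖) + K * ⨆ m, ‖f m‖) :=
    ciSup_le fun n => hfix n ▸ tsum_of_norm_bounded
      ((hasSum_pow_natAbs_sub (Real.exp_pos _).le hr1 (n - 1)).mul_right _) (hterm n)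
  intro n
  rw [mul_div_assoc δ]
  exact (norm_le_iSup_norm hx n).trans (le_mul_div_of_le_mul_add hδS hsup)

/-- A priori bound for the bounded solution of the perturbed nonhomogeneous equation. -/
theorem stmt_3 {X : Type*} [NormedAddCommGroup X] [NormedSpace ℝ X] [CompleteSpace X]
    (α K δ : ℝ) (hα : 0 < α) (hK : 1 ≤ K)
    (hδ0 : 0 ≤ δ) (hδ : δ < (1 - Real.exp (-α)) / (1 + Real.exp (-α)))
    (G : ℤ → ℤ → X →L[ℝ] X)
    (hG : ∀ n k : ℤ, ‖G n k‖ ≤ K * Real.exp (-α * ((|n - k| : ℤ) : ℝ)))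
    (B : ℤ → X →L[ℝ] X) (hB : ∀ k, ‖B k‖ ≤ δ * K⁻¹)
    (f : ℤ → X) (hf : ∃ C, ∀ n, ‖f n‖ ≤ C)
    (x : ℤ → X) (hx : ∃ C, ∀ n, ‖x n‖ ≤ C)
    (hfix : ∀ n : ℤ, x n = ∑' k : ℤ, G n (k + 1) (B k (x k) + f k)) :
    ∀ n : ℤ, ‖x n‖ ≤ (1 + Real.exp (-α)) / (1 - Real.exp (-α)) *
      (K * (⨆ m : ℤ, ‖f m‖) / (1 - δ * (1 + Real.exp (-α)) / (1 - Real.exp (-α)))) :=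
  stmt_3_general α K δ hα hK hδ G hG B hB f hf x hx hfix
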